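/- Let γ > 2. Then λ̄'_γ(F) = 0; equivalently, for every μ > 0 there is no C² function u : (0,1) → ℝ with u > 0 on (0,1) satisfying F(D(u''(r), u'(r)/r)) + μ·u(r)·r^{−γ} ≤ 0 for all r ∈ (0,1). -/

import Mathlib

/-!
Comparing `F` with the minimal Pucci operator turns the radial inequality into
`u'' ≤ k (u'/r)⁻ - c u r^(-γ)` with `k = (Λ/λ)(N-1)` and `c = μ/Λ`. For `w = -u'/u` this is the
Riccati inequality `w' ≥ w² - k w⁺/r + c r^(-γ) ≥ c r^(-γ) - k²/(4r²)`, so integrating from `s`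
to `1/2` gives `w(s) ≤ C - c s^(1-γ)/(γ-1) + k²/(4s)`. On the other hand `u'' < 0` wherever
`u' ≥ 0`, so `u` is concave to the left of any point where `u' > 0`, and positivity of `u` yields
`s u'(s) < 2 u(s)`, i.e. `w(s) > -2/s`. As `γ > 2`, the term `s^(1-γ)` beats `1/s` when `s → 0`,
a contradiction. For `μ ≤ 0` the constant `1` is admissible, so the supremum is `0`.
-/

open Set Real Filter MeasureTheory Matrix

noncomputable section

/-- The `N × N` diagonal matrix with first diagonal entry `a` and the remaining
`N - 1` diagonal entries equal to `b`. -/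
def Dmat (N : ℕ) (a b : ℝ) : Matrix (Fin N) (Fin N) ℝ :=
  Matrix.diagonal (fun i => if (i : ℕ) = 0 then a else b)

/-- Uniform ellipticity with constants `0 < lam ≤ Lam`. -/
def UnifElliptic (N : ℕ) (lam Lam : ℝ) (F : Matrix (Fin N) (Fin N) ℝ → ℝ) : Prop :=
  ∀ M P : Matrix (Fin N) (Fin N) ℝ, M.IsSymm → P.PosSemidef →
    lam * P.trace ≤ F (M + P) - F M ∧ F (M + P) - F M ≤ Lam * P.trace

/-- Rotation invariance. -/
def RotInvariant (N : ℕ) (F : Matrix (Fin N) (Fin N) ℝ → ℝ) : Prop :=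
  ∀ O M : Matrix (Fin N) (Fin N) ℝ, Oᵀ * O = 1 → F (Oᵀ * M * O) = F M

/-- Positive one-homogeneity. -/
def PosHomog (N : ℕ) (F : Matrix (Fin N) (Fin N) ℝ → ℝ) : Prop :=
  ∀ t : ℝ, 0 < t → ∀ M : Matrix (Fin N) (Fin N) ℝ, F (t • M) = t * F M

/-- The radial principal eigenvalue `λ̄'_γ(F)` on the punctured unit ball. -/
def radialEV (N : ℕ) (F : Matrix (Fin N) (Fin N) ℝ → ℝ) (γ : ℝ) : ℝ :=
  sSup {μ : ℝ | ∃ u : ℝ → ℝ, ContDiffOn ℝ 2 u (Ioo 0 1) ∧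
    (∀ r ∈ Ioo (0:ℝ) 1, 0 < u r) ∧
    (∀ r ∈ Ioo (0:ℝ) 1,
      F (Dmat N (deriv (deriv u) r) (deriv u r / r)) + μ * u r * r ^ (-γ) ≤ 0)}

open Topology

theorem Dmat_add (N : ℕ) (a b a' b' : ℝ) :
    Dmat N a b + Dmat N a' b' = Dmat N (a + a') (b + b') := by
  simp only [Dmat, diagonal_add]
  congr 1
  ext i
  split_ifs <;> rfl

theorem Dmat_neg (N : ℕ) (a b : ℝ) : -Dmat N a b = Dmat N (-a) (-b) := by
  simp only [Dmat, diagonal_neg]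
  congr 1
  ext i
  split_ifs <;> rfl

theorem Dmat_zero (N : ℕ) : Dmat N 0 0 = 0 := by
  simp [Dmat]

theorem Dmat_isSymm (N : ℕ) (a b : ℝ) : (Dmat N a b).IsSymm := isSymm_diagonal _

theorem Dmat_posSemidef {N : ℕ} {a b : ℝ} (ha : 0 ≤ a) (hb : 0 ≤ b) :
    (Dmat N a b).PosSemidef :=
  posSemidef_diagonal_iff.mpr fun _ => by split_ifs <;> assumption

theorem Dmat_trace {N : ℕ} (hN : 1 ≤ N) (a b : ℝ) :
    (Dmat N a b).trace = a + ((N : ℝ) - 1) * b := by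
  obtain ⟨n, rfl⟩ : ∃ n, N = n + 1 := ⟨N - 1, by omega⟩
  simp [Dmat, trace_diagonal, Fin.sum_univ_succ]

theorem PosHomog.map_zero {N : ℕ} {F : Matrix (Fin N) (Fin N) ℝ → ℝ} (hF : PosHomog N F) :
    F 0 = 0 := by
  have h := hF 2 two_pos 0
  rw [smul_zero] at h
  linarith

section Pucci

variable {N : ℕ} {lam Lam : ℝ} {F : Matrix (Fin N) (Fin N) ℝ → ℝ}

/-- The left-hand side is the minimal Pucci operator `𝓜⁻_{λ,Λ}` evaluated at `D(a, b)`. -/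
theorem UnifElliptic.pucci_le_apply_Dmat (hF : UnifElliptic N lam Lam F) (hF0 : F 0 = 0)
    (hN : 1 ≤ N) (a b : ℝ) :
    lam * (a⁺ + ((N : ℝ) - 1) * b⁺) - Lam * (a⁻ + ((N : ℝ) - 1) * b⁻) ≤ F (Dmat N a b) := by
  have hP := Dmat_posSemidef (N := N) (posPart_nonneg a) (posPart_nonneg b)
  have hQ := Dmat_posSemidef (N := N) (negPart_nonneg a) (negPart_nonneg b)
  have hsymm : (-Dmat N a⁻ b⁻).IsSymm := by rw [Dmat_neg]; exact Dmat_isSymm N _ _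
  have hsplit : -Dmat N a⁻ b⁻ + Dmat N a⁺ b⁺ = Dmat N a b := by
    rw [Dmat_neg, Dmat_add, neg_add_eq_sub, neg_add_eq_sub, posPart_sub_negPart,
      posPart_sub_negPart]
  have hlow := (hF _ _ hsymm hP).1
  have hup := (hF _ _ hsymm hQ).2
  rw [hsplit, Dmat_trace hN] at hlow
  rw [neg_add_cancel, hF0, Dmat_trace hN] at hup
  linarith

theorem UnifElliptic.le_of_apply_Dmat_add_nonpos (hF : UnifElliptic N lam Lam F) (hF0 : F 0 = 0)
    (hN : 1 ≤ N) (hlam : 0 < lam) (hlL : lam ≤ Lam) {a b K : ℝ} (hK : 0 ≤ K)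
    (h : F (Dmat N a b) + K ≤ 0) :
    a ≤ Lam / lam * ((N : ℝ) - 1) * b⁻ - K / Lam := by
  have hpucci := hF.pucci_le_apply_Dmat hF0 hN a b
  have hLam : 0 < Lam := hlam.trans_le hlL
  have hN1 : (0 : ℝ) ≤ N - 1 := sub_nonneg.mpr (by exact_mod_cast hN)
  have hb : 0 ≤ ((N : ℝ) - 1) * b⁻ := mul_nonneg hN1 (negPart_nonneg b)
  have hb' : 0 ≤ lam * (((N : ℝ) - 1) * b⁺) :=
    mul_nonneg hlam.le (mul_nonneg hN1 (posPart_nonneg b))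
  rw [mul_assoc, div_mul_eq_mul_div, div_sub_div _ _ hlam.ne' hLam.ne', le_div_iff₀ (by positivity)]
  rcases le_total 0 a with ha | ha
  · rw [posPart_eq_self.mpr ha, negPart_eq_zero.mpr ha] at hpucci
    have h : lam * a ≤ Lam * (((N : ℝ) - 1) * b⁻) - K := by linarith
    nlinarith [mul_le_mul_of_nonneg_left h hLam.le, mul_le_mul_of_nonneg_right hlL hK]
  · rw [posPart_eq_zero.mpr ha, negPart_eq_neg.mpr ha] at hpucci
    have h : Lam * a ≤ Lam * (((N : ℝ) - 1) * b⁻) - K := by linarith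
    nlinarith [mul_le_mul_of_nonneg_left h hlam.le, mul_le_mul_of_nonneg_right hlL hb,
      mul_le_mul_of_nonneg_right hlL (mul_nonneg hLam.le hb)]

end Pucci

theorem nonneg_of_hasDerivAt_neg_of_nonneg {f f' : ℝ → ℝ} {a b : ℝ} (hab : a ≤ b)
    (hf : ∀ x ∈ Icc a b, HasDerivAt f (f' x) x) (hneg : ∀ x ∈ Icc a b, 0 ≤ f x → f' x < 0)
    (hb : 0 ≤ f b) : 0 ≤ f a := by
  have hcont : ContinuousOn f (Icc a b) := fun x hx => (hf x hx).continuousAt.continuousWithinAt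
  have hclosed : IsClosed ({x | 0 ≤ f x} ∩ Icc a b) := by
    rw [inter_comm]; exact hcont.preimage_isClosed_of_isClosed isClosed_Icc isClosed_Ici
  refine hclosed.mem_of_ge_of_forall_exists_lt hb hab fun x ⟨(hfx : 0 ≤ f x), hx⟩ => ?_
  have hx' : x ∈ Icc a b := Ioc_subset_Icc_self hx
  have hslope : ∀ᶠ y in 𝓝[<] x, slope f x y < 0 :=
    (hasDerivAt_iff_tendsto_slope_left_right.mp (hf x hx')).1.eventually_lt_const
      (hneg x hx' hfx)
  obtain ⟨y, hyslope, hy⟩ := (hslope.and (Ioo_mem_nhdsLT hx.1)).exists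
  rw [slope_def_field, div_neg_iff] at hyslope
  refine ⟨y, ?_, hy.1.le, hy.2⟩
  rcases hyslope with ⟨hfy, -⟩ | ⟨-, hyx⟩
  · exact (by linarith : (0 : ℝ) < f y).le
  · linarith [hy.2]

theorem ContDiffOn.hasDerivAt_of_isOpen {u : ℝ → ℝ} {s : Set ℝ} {n : WithTop ℕ∞}
    (hu : ContDiffOn ℝ n u s) (hs : IsOpen s) (hn : n ≠ 0) {x : ℝ} (hx : x ∈ s) :
    HasDerivAt u (deriv u x) x :=
  ((hu.contDiffAt (hs.mem_nhds hx)).differentiableAt hn).hasDerivAt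

theorem ContDiffOn.hasDerivAt_deriv_of_isOpen {u : ℝ → ℝ} {s : Set ℝ}
    (hu : ContDiffOn ℝ 2 u s) (hs : IsOpen s) {x : ℝ} (hx : x ∈ s) :
    HasDerivAt (deriv u) (deriv (deriv u) x) x :=
  (hu.deriv_of_isOpen hs (by norm_num)).hasDerivAt_of_isOpen (n := 1) hs one_ne_zero hx

section RadialInequality

variable {u : ℝ → ℝ} {k c γ : ℝ} (hu : ContDiffOn ℝ 2 u (Ioo 0 1))
  (hpos : ∀ r ∈ Ioo (0 : ℝ) 1, 0 < u r)
  (hode : ∀ r ∈ Ioo (0 : ℝ) 1, deriv (deriv u) r ≤ k * (deriv u r / r)⁻ - c * u r * r ^ (-γ))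
include hu hpos hode

theorem deriv_le_deriv_of_radial_ineq (hc : 0 < c) {r s : ℝ} (hr : 0 < r) (hrs : r ≤ s)
    (hs : s < 1) (hs' : 0 ≤ deriv u s) :
    deriv u s ≤ deriv u r := by
  have hsub : Icc r s ⊆ Ioo 0 1 := Icc_subset_Ioo hr hs
  -- wherever `u' ≥ u'(s) ≥ 0`, the inequality forces `u'' < 0`
  refine sub_nonneg.mp <| nonneg_of_hasDerivAt_neg_of_nonneg (f := fun x => deriv u x - deriv u s)
    hrs (fun x hx => (hu.hasDerivAt_deriv_of_isOpen isOpen_Ioo (hsub hx)).sub_const _)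
    (fun x hx hx' => ?_) (by simp)
  have hx := hsub hx
  have hnonneg : 0 ≤ deriv u x / x := div_nonneg (by linarith) hx.1.le
  have := hode x hx
  rw [negPart_eq_zero.mpr hnonneg, mul_zero, zero_sub] at this
  have := mul_pos (mul_pos hc (hpos x hx)) (rpow_pos_of_pos hx.1 (-γ))
  linarith

theorem mul_deriv_lt_of_radial_ineq (hc : 0 < c) {s : ℝ} (hs : s ∈ Ioo (0 : ℝ) 1) :
    s * deriv u s < 2 * u s := by
  have hs0 := hs.1
  rcases le_or_gt (deriv u s) 0 with hneg | hnonneg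
  · nlinarith [hpos s hs]
  have hsub : Icc (s / 2) s ⊆ Ioo 0 1 := Icc_subset_Ioo (by linarith) hs.2
  obtain ⟨ξ, hξ, hslope⟩ := exists_hasDerivAt_eq_slope u (deriv u) (by linarith : s / 2 < s)
    (fun x hx => (hu.hasDerivAt_of_isOpen isOpen_Ioo two_ne_zero (hsub hx)).continuousAt
      |>.continuousWithinAt)
    (fun x hx => hu.hasDerivAt_of_isOpen isOpen_Ioo two_ne_zero (hsub (Ioo_subset_Icc_self hx)))
  have hmono := deriv_le_deriv_of_radial_ineq hu hpos hode hc (by linarith [hξ.1]) hξ.2.le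
    hs.2 hnonneg.le
  rw [hslope, le_div_iff₀ (by linarith)] at hmono
  have := hpos (s / 2) (hsub (left_mem_Icc.mpr (by linarith)))
  nlinarith

/-- `-u'/u` minus an antiderivative of `c r^(-γ) - k²/(4r²)`, a lower bound for `(-u'/u)'`. -/
theorem monotoneOn_riccati_of_radial_ineq (hγ : 1 < γ) :
    MonotoneOn (fun r => -deriv u r / u r + c / (γ - 1) * r ^ (1 - γ) - k ^ 2 / 4 * r⁻¹)
      (Ioo 0 1) := by
  have hderiv : ∀ r ∈ Ioo (0 : ℝ) 1, HasDerivAt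
      (fun r => -deriv u r / u r + c / (γ - 1) * r ^ (1 - γ) - k ^ 2 / 4 * r⁻¹)
      ((-deriv (deriv u) r * u r - -deriv u r * deriv u r) / u r ^ 2
        + c / (γ - 1) * ((1 - γ) * r ^ (1 - γ - 1)) - k ^ 2 / 4 * -(r ^ 2)⁻¹) r := fun r hr =>
    ((((hu.hasDerivAt_deriv_of_isOpen isOpen_Ioo hr).neg.div
      (hu.hasDerivAt_of_isOpen isOpen_Ioo two_ne_zero hr) (hpos r hr).ne').add
      ((hasDerivAt_rpow_const (Or.inl hr.1.ne')).const_mul _)).sub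
      ((hasDerivAt_inv hr.1.ne').const_mul _))
  refine monotoneOn_of_hasDerivWithinAt_nonneg (convex_Ioo 0 1)
    (fun r hr => (hderiv r hr).continuousAt.continuousWithinAt)
    (fun r hr => (hderiv r (interior_subset hr)).hasDerivWithinAt) fun r hr => ?_
  rw [interior_Ioo] at hr
  have hr0 := hr.1
  have hq := hpos r hr
  set p := deriv u r
  have hm : ((p / r)⁻ * r) ^ 2 ≤ p ^ 2 := by
    rcases le_total 0 p with hp | hp
    · rw [negPart_eq_zero.mpr (div_nonneg hp hr0.le)]; nlinarith
    · rw [negPart_eq_neg.mpr (div_nonpos_of_nonpos_of_nonneg hp hr0.le), neg_mul,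
        div_mul_cancel₀ _ hr0.ne', neg_sq]
  have hpow : c / (γ - 1) * ((1 - γ) * r ^ (1 - γ - 1)) = -(c * r ^ (-γ)) := by
    rw [sub_sub, add_comm, ← sub_sub, sub_self, zero_sub]
    field_simp [(by linarith : γ - 1 ≠ 0)]
    ring
  have hsplit : (-deriv (deriv u) r * u r - -p * p) / u r ^ 2 + -(c * r ^ (-γ))
      - k ^ 2 / 4 * -(r ^ 2)⁻¹ = (4 * r ^ 2 * (-(deriv (deriv u) r) * u r + p ^ 2
        - c * r ^ (-γ) * u r ^ 2) + k ^ 2 * u r ^ 2) / (4 * r ^ 2 * u r ^ 2) := by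
    field_simp
    ring
  rw [hpow, hsplit]
  refine div_nonneg ?_ (by positivity)
  have hode' := mul_le_mul_of_nonneg_left (hode r hr) (by positivity : 0 ≤ 4 * r ^ 2 * u r)
  nlinarith [sq_nonneg (2 * (p / r)⁻ * r ^ 2 - k * u r),
    mul_le_mul_of_nonneg_left hm (by positivity : (0 : ℝ) ≤ 4 * r ^ 2)]

theorem false_of_radial_ineq (hγ : 2 < γ) (hc : 0 < c) : False := by
  set φ := fun r => -deriv u r / u r + c / (γ - 1) * r ^ (1 - γ) - k ^ 2 / 4 * r⁻¹
  have hγ1 : 0 < γ - 1 := by linarith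
  have hblowup := tendsto_rpow_neg_nhdsGT_zero (by linarith : 2 - γ < 0)
  obtain ⟨s, hsB, hs⟩ := ((hblowup.eventually_gt_atTop
      ((γ - 1) / c * (|φ (1 / 2)| + 2 + k ^ 2 / 4))).and
    (Ioo_mem_nhdsGT (by norm_num : (0 : ℝ) < 1 / 2))).exists
  have hs1 : s ∈ Ioo (0 : ℝ) 1 := ⟨hs.1, by linarith [hs.2]⟩
  have hφ : φ s ≤ φ (1 / 2) :=
    monotoneOn_riccati_of_radial_ineq hu hpos hode (by linarith) hs1 (by norm_num) hs.2.le
  have hw : -2 < s * (-deriv u s / u s) := by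
    have := mul_deriv_lt_of_radial_ineq hu hpos hode hc hs1
    rw [mul_div_assoc', lt_div_iff₀ (hpos s hs1)]
    linarith
  have hexpand : s * φ s = s * (-deriv u s / u s) + c / (γ - 1) * s ^ (2 - γ) - k ^ 2 / 4 := by
    have := hs.1.ne'
    simp only [φ]
    rw [show 2 - γ = 1 - γ + 1 by ring, rpow_add_one this]
    field_simp
  have hB : c / (γ - 1) * s ^ (2 - γ) < |φ (1 / 2)| + 2 + k ^ 2 / 4 := by
    have : s * φ s ≤ |φ (1 / 2)| := calc
      s * φ s ≤ s * |φ (1 / 2)| := mul_le_mul_of_nonneg_left (hφ.trans (le_abs_self _)) hs.1.le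
      _ ≤ |φ (1 / 2)| := mul_le_of_le_one_left (abs_nonneg _) (by linarith [hs.2])
    linarith
  rw [div_mul_eq_mul_div, div_lt_iff₀ hγ1] at hB
  rw [div_mul_eq_mul_div, div_lt_iff₀ hc] at hsB
  nlinarith

end RadialInequality

def IsPosRadialSupersolution (N : ℕ) (F : Matrix (Fin N) (Fin N) ℝ → ℝ) (γ μ : ℝ)
    (u : ℝ → ℝ) : Prop :=
  ContDiffOn ℝ 2 u (Ioo 0 1) ∧ (∀ r ∈ Ioo (0 : ℝ) 1, 0 < u r) ∧
    ∀ r ∈ Ioo (0 : ℝ) 1, F (Dmat N (deriv (deriv u) r) (deriv u r / r)) + μ * u r * r ^ (-γ) ≤ 0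

theorem radialEV_eq_sSup (N : ℕ) (F : Matrix (Fin N) (Fin N) ℝ → ℝ) (γ : ℝ) :
    radialEV N F γ = sSup {μ | ∃ u, IsPosRadialSupersolution N F γ μ u} :=
  rfl

namespace IsPosRadialSupersolution

variable {N : ℕ} {lam Lam : ℝ} {F : Matrix (Fin N) (Fin N) ℝ → ℝ} {γ μ : ℝ} {u : ℝ → ℝ}

theorem of_nonpos (hF0 : F 0 = 0) (hμ : μ ≤ 0) :
    IsPosRadialSupersolution N F γ μ fun _ => 1 := by
  refine ⟨contDiffOn_const, fun _ _ => one_pos, fun r hr => ?_⟩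
  simp only [deriv_const', zero_div, Dmat_zero, hF0, mul_one, zero_add]
  exact mul_nonpos_of_nonpos_of_nonneg hμ (rpow_pos_of_pos hr.1 _).le

theorem deriv_deriv_le (hu : IsPosRadialSupersolution N F γ μ u)
    (hF : UnifElliptic N lam Lam F) (hF0 : F 0 = 0) (hN : 1 ≤ N) (hlam : 0 < lam)
    (hlL : lam ≤ Lam) (hμ : 0 ≤ μ) {r : ℝ} (hr : r ∈ Ioo (0 : ℝ) 1) :
    deriv (deriv u) r ≤
      Lam / lam * ((N : ℝ) - 1) * (deriv u r / r)⁻ - μ / Lam * u r * r ^ (-γ) := by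
  have h := hF.le_of_apply_Dmat_add_nonpos hF0 hN hlam hlL
    (mul_nonneg (mul_nonneg hμ (hu.2.1 r hr).le) (rpow_pos_of_pos hr.1 _).le) (hu.2.2 r hr)
  rwa [mul_assoc μ, mul_div_right_comm, ← mul_assoc] at h

theorem false_of_two_lt (hu : IsPosRadialSupersolution N F γ μ u)
    (hF : UnifElliptic N lam Lam F) (hF0 : F 0 = 0) (hN : 1 ≤ N) (hlam : 0 < lam)
    (hlL : lam ≤ Lam) (hμ : 0 < μ) (hγ : 2 < γ) : False :=
  false_of_radial_ineq hu.1 hu.2.1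
    (fun _ hr => hu.deriv_deriv_le hF hF0 hN hlam hlL hμ.le hr) hγ (div_pos hμ (hlam.trans_le hlL))

end IsPosRadialSupersolution

theorem stmt6_general (N : ℕ) (hN : 2 ≤ N) (lam Lam : ℝ) (hlam : 0 < lam) (hlL : lam ≤ Lam)
    (F : Matrix (Fin N) (Fin N) ℝ → ℝ)
    (hF1 : UnifElliptic N lam Lam F) (hF3 : PosHomog N F)
    (γ : ℝ) (hγ : 2 < γ) :
    radialEV N F γ = 0 ∧
    ∀ μ : ℝ, 0 < μ →
      ¬ ∃ u : ℝ → ℝ, ContDiffOn ℝ 2 u (Ioo 0 1) ∧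
          (∀ r ∈ Ioo (0:ℝ) 1, 0 < u r) ∧
          (∀ r ∈ Ioo (0:ℝ) 1,
            F (Dmat N (deriv (deriv u) r) (deriv u r / r)) + μ * u r * r ^ (-γ) ≤ 0) := by
  have hnone (μ : ℝ) (hμ : 0 < μ) : ¬ ∃ u, IsPosRadialSupersolution N F γ μ u :=
    fun ⟨_, hu⟩ => hu.false_of_two_lt hF1 hF3.map_zero (by omega) hlam hlL hμ hγ
  have hset : {μ | ∃ u, IsPosRadialSupersolution N F γ μ u} = Iic 0 := by
    ext μ
    refine ⟨fun hμ => not_lt.mp fun hpos => hnone μ hpos hμ, fun hμ => ?_⟩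
    exact ⟨_, IsPosRadialSupersolution.of_nonpos hF3.map_zero hμ⟩
  exact ⟨by rw [radialEV_eq_sSup, hset, csSup_Iic], hnone⟩

theorem stmt6 (N : ℕ) (hN : 2 ≤ N) (lam Lam : ℝ) (hlam : 0 < lam) (hlL : lam ≤ Lam)
    (hNp : 2 < lam / Lam * ((N : ℝ) - 1) + 1)
    (F : Matrix (Fin N) (Fin N) ℝ → ℝ)
    (hF1 : UnifElliptic N lam Lam F) (hF2 : RotInvariant N F) (hF3 : PosHomog N F)
    (γ : ℝ) (hγ : 2 < γ) :
    radialEV N F γ = 0 ∧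
    ∀ μ : ℝ, 0 < μ →
      ¬ ∃ u : ℝ → ℝ, ContDiffOn ℝ 2 u (Ioo 0 1) ∧
          (∀ r ∈ Ioo (0:ℝ) 1, 0 < u r) ∧
          (∀ r ∈ Ioo (0:ℝ) 1,
            F (Dmat N (deriv (deriv u) r) (deriv u r / r)) + μ * u r * r ^ (-γ) ≤ 0) :=
  stmt6_general N hN lam Lam hlam hlL F hF1 hF3 γ hγ

end
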